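/- Let H be a Hopf algebra over a commutative ring R. There are R-module homomorphisms i_l : ∫_l → C_{H⊗H}(H), t ↦ (1⊗S)Δ(t) = Σ t₁ ⊗ S(t₂), and p_l : C_{H⊗H}(H) → ∫_l, Σᵢ xᵢ⊗yᵢ ↦ Σᵢ xᵢ ε(yᵢ), satisfying p_l ∘ i_l = id on the module of left integrals ∫_l. Analogously i_r(t) = (S⊗1)Δ(t) and p_r(Σ xᵢ⊗yᵢ) = Σ ε(xᵢ)yᵢ satisfy p_r ∘ i_r = id on right integrals. -/

import Mathlib

universe u v

open TensorProduct

variable {R : Type u} {H : Type v}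

/-- A left integral: `h * t = ε(h) • t` for all `h`. -/
def IsLeftIntegral (R : Type u) {H : Type v} [CommRing R] [Ring H] [HopfAlgebra R H]
    (t : H) : Prop :=
  ∀ h : H, h * t = Coalgebra.counit (R := R) h • t

/-- A right integral: `t * h = ε(h) • t` for all `h`. -/
def IsRightIntegral (R : Type u) {H : Type v} [CommRing R] [Ring H] [HopfAlgebra R H]
    (t : H) : Prop :=
  ∀ h : H, t * h = Coalgebra.counit (R := R) h • t

/-- An `H`-centralising element of `H ⊗ H`: `Σ h·xᵢ ⊗ yᵢ = Σ xᵢ ⊗ yᵢ·h` for all `h`. -/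
def IsCentralising (R : Type u) {H : Type v} [CommRing R] [Ring H] [HopfAlgebra R H]
    (x : H ⊗[R] H) : Prop :=
  ∀ h : H, (h ⊗ₜ[R] (1 : H)) * x = x * ((1 : H) ⊗ₜ[R] h)

/-- `i_l(t) = (1 ⊗ S)Δ(t) = Σ t₁ ⊗ S(t₂)`. -/
noncomputable def iL (R : Type u) {H : Type v} [CommRing R] [Ring H] [HopfAlgebra R H]
    (t : H) : H ⊗[R] H :=
  (HopfAlgebra.antipode (R := R)).lTensor H (Coalgebra.comul t)

/-- `p_l(Σ xᵢ ⊗ yᵢ) = Σ xᵢ ε(yᵢ)`. -/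
noncomputable def pL (R : Type u) {H : Type v} [CommRing R] [Ring H] [HopfAlgebra R H]
    (x : H ⊗[R] H) : H :=
  TensorProduct.rid R H ((Coalgebra.counit (R := R)).lTensor H x)

/-- `i_r(t) = (S ⊗ 1)Δ(t) = Σ S(t₁) ⊗ t₂`. -/
noncomputable def iR (R : Type u) {H : Type v} [CommRing R] [Ring H] [HopfAlgebra R H]
    (t : H) : H ⊗[R] H :=
  (HopfAlgebra.antipode (R := R)).rTensor H (Coalgebra.comul t)

/-- `p_r(Σ xᵢ ⊗ yᵢ) = Σ ε(xᵢ) yᵢ`. -/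
noncomputable def pR (R : Type u) {H : Type v} [CommRing R] [Ring H] [HopfAlgebra R H]
    (x : H ⊗[R] H) : H :=
  TensorProduct.lid R H ((Coalgebra.counit (R := R)).rTensor H x)

/-! For a left integral `t`, anti-multiplicativity of `S` gives
`iL (a t) = Σ (a₁ ⊗ 1) iL(t) (1 ⊗ S a₂)`. Writing `h ⊗ 1 = Σ h₁ ⊗ S(h₂) h₃` then yields
`(h ⊗ 1) iL(t) = Σ iL(h₁ t) (1 ⊗ h₂)`, and `h₁ t = ε(h₁) t` turns the right side into
`iL(t) (1 ⊗ h)`. The projections are module maps for multiplication on the side they keep and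
pass the other side through `ε`, so they send centralising elements to integrals, and
`ε ∘ S = ε` gives `pL ∘ iL = id`. The right-handed statements are the mirror images. -/

open Coalgebra HopfAlgebra LinearMap Algebra.TensorProduct

section AlgebraTensorProduct

variable {R A B : Type*} [CommSemiring R] [Semiring A] [Semiring B] [Algebra R A] [Algebra R B]

noncomputable def sandwich (z : A ⊗[R] B) : A ⊗[R] B →ₗ[R] A ⊗[R] B :=
  LinearMap.mul' R (A ⊗[R] B) ∘ₗ
    TensorProduct.map (mulRight R z ∘ₗ (TensorProduct.mk R A B).flip 1) (TensorProduct.mk R A B 1)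

@[simp]
lemma sandwich_tmul (z : A ⊗[R] B) (a : A) (b : B) :
    sandwich z (a ⊗ₜ b) = (a ⊗ₜ 1) * z * (1 ⊗ₜ b) := by
  simp [sandwich]

lemma sandwich_mul_one_tmul (z w : A ⊗[R] B) (b : B) :
    sandwich z (w * (1 ⊗ₜ b)) = sandwich z w * (1 ⊗ₜ b) := by
  induction w using TensorProduct.induction_on with
  | zero => simp
  | tmul a c => simp [tmul_mul_tmul, mul_assoc]
  | add w₁ w₂ h₁ h₂ => simp_all [add_mul]

lemma sandwich_tmul_one_mul (z w : A ⊗[R] B) (a : A) :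
    sandwich z ((a ⊗ₜ 1) * w) = (a ⊗ₜ 1) * sandwich z w := by
  induction w using TensorProduct.induction_on with
  | zero => simp
  | tmul c b => simp [← mul_assoc, tmul_mul_tmul]
  | add w₁ w₂ h₁ h₂ => simp_all [mul_add]

lemma lTensor_mul'_assoc_tmul (w : A ⊗[R] B) (b : B) :
    (LinearMap.mul' R B).lTensor A (TensorProduct.assoc R A B B (w ⊗ₜ b)) = w * (1 ⊗ₜ b) := by
  induction w using TensorProduct.induction_on with
  | zero => simp
  | tmul a c => simp
  | add w₁ w₂ h₁ h₂ => simp_all [TensorProduct.add_tmul, add_mul]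

lemma rTensor_mul'_assoc_symm_tmul (a : A) (w : A ⊗[R] B) :
    (LinearMap.mul' R A).rTensor B ((TensorProduct.assoc R A A B).symm (a ⊗ₜ w)) =
      (a ⊗ₜ 1) * w := by
  induction w using TensorProduct.induction_on with
  | zero => simp
  | tmul c b => simp
  | add w₁ w₂ h₁ h₂ => simp_all [TensorProduct.tmul_add, mul_add]

end AlgebraTensorProduct

namespace HopfAlgebra

variable {R H : Type*} [CommSemiring R] [Semiring H] [HopfAlgebra R H]

lemma lTensor_antipode_mul (x y : H ⊗[R] H) :
    (antipode R).lTensor H (x * y) =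
      sandwich ((antipode R).lTensor H y) ((antipode R).lTensor H x) := by
  induction x using TensorProduct.induction_on with
  | zero => simp
  | tmul a b =>
    induction y using TensorProduct.induction_on with
    | zero => simp
    | tmul c d => simp [tmul_mul_tmul, antipode_mul_antidistrib]
    | add y₁ y₂ h₁ h₂ => simp_all [mul_add, add_mul]
  | add x₁ x₂ h₁ h₂ => simp_all [add_mul]

lemma rTensor_antipode_mul (x y : H ⊗[R] H) :
    (antipode R).rTensor H (x * y) =
      sandwich ((antipode R).rTensor H x) ((antipode R).rTensor H y) := by
  induction y using TensorProduct.induction_on with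
  | zero => simp
  | tmul c d =>
    induction x using TensorProduct.induction_on with
    | zero => simp
    | tmul a b => simp [tmul_mul_tmul, antipode_mul_antidistrib]
    | add x₁ x₂ h₁ h₂ => simp_all [mul_add, add_mul]
  | add y₁ y₂ h₁ h₂ => simp_all [mul_add]

variable (R H) in
/-- `a ⊗ b ↦ Σ a₁ ⊗ S(a₂) b`, the inverse of the Galois map `a ⊗ b ↦ Δ(a) (1 ⊗ b)`. -/
noncomputable def galoisInvL : H ⊗[R] H →ₗ[R] H ⊗[R] H :=
  (LinearMap.mul' R H).lTensor H ∘ₗ (TensorProduct.assoc R H H H).toLinearMap ∘ₗ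
    ((antipode R).lTensor H ∘ₗ comul).rTensor H

variable (R H) in
/-- `a ⊗ b ↦ Σ a S(b₁) ⊗ b₂`, the inverse of the Galois map `a ⊗ b ↦ (a ⊗ 1) Δ(b)`. -/
noncomputable def galoisInvR : H ⊗[R] H →ₗ[R] H ⊗[R] H :=
  (LinearMap.mul' R H).rTensor H ∘ₗ (TensorProduct.assoc R H H H).symm.toLinearMap ∘ₗ
    ((antipode R).rTensor H ∘ₗ comul).lTensor H

lemma galoisInvL_tmul (a b : H) :
    galoisInvL R H (a ⊗ₜ b) = (antipode R).lTensor H (comul a) * (1 ⊗ₜ b) := by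
  simp [galoisInvL, lTensor_mul'_assoc_tmul]

lemma galoisInvR_tmul (a b : H) :
    galoisInvR R H (a ⊗ₜ b) = (a ⊗ₜ 1) * (antipode R).rTensor H (comul b) := by
  simp [galoisInvR, rTensor_mul'_assoc_symm_tmul]

lemma galoisInvL_comul (h : H) : galoisInvL R H (comul h) = h ⊗ₜ 1 := by
  calc galoisInvL R H (comul h)
      = (LinearMap.mul' R H).lTensor H (((antipode R).rTensor H).lTensor H
          (TensorProduct.assoc R H H H (comul.rTensor H (comul h)))) := by
        simp only [galoisInvL, comp_apply, rTensor_comp_apply]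
        exact congrArg _
          (LinearMap.congr_fun (lTensor_rTensor_comp_assoc H (P := H) (Q := H) (antipode R)) _).symm
    _ = (LinearMap.mul' R H ∘ₗ (antipode R).rTensor H ∘ₗ comul).lTensor H (comul h) := by
        rw [coassoc_apply, lTensor_comp_apply, lTensor_comp_apply]
    _ = h ⊗ₜ 1 := by
        rw [mul_antipode_rTensor_comul, lTensor_comp_apply, lTensor_counit_comul]
        simp

lemma galoisInvR_comul (h : H) : galoisInvR R H (comul h) = 1 ⊗ₜ h := by
  calc galoisInvR R H (comul h)
      = (LinearMap.mul' R H).rTensor H (((antipode R).lTensor H).rTensor H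
          ((TensorProduct.assoc R H H H).symm (comul.lTensor H (comul h)))) := by
        simp only [galoisInvR, comp_apply, lTensor_comp_apply]
        exact congrArg _
          (LinearMap.congr_fun
            (rTensor_lTensor_comp_assoc_symm H (P := H) (Q := H) (antipode R)) _).symm
    _ = (LinearMap.mul' R H ∘ₗ (antipode R).lTensor H ∘ₗ comul).rTensor H (comul h) := by
        rw [coassoc_symm_apply, rTensor_comp_apply, rTensor_comp_apply]
    _ = 1 ⊗ₜ h := by
        rw [mul_antipode_lTensor_comul, rTensor_comp_apply, rTensor_counit_comul]
        simp

end HopfAlgebra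

section Integrals

variable [CommRing R] [Ring H] [HopfAlgebra R H]

lemma iL_mul (a t : H) : iL R (a * t) = sandwich (iL R t) (iL R a) := by
  simp only [iL, Bialgebra.comul_mul, lTensor_antipode_mul]

lemma iR_mul (t b : H) : iR R (t * b) = sandwich (iR R t) (iR R b) := by
  simp only [iR, Bialgebra.comul_mul, rTensor_antipode_mul]

lemma isCentralising_iL {t : H} (ht : IsLeftIntegral R t) : IsCentralising R (iL R t) := by
  have key (x : H ⊗[R] H) : sandwich (iL R t) (galoisInvL R H x) =
      iL R t * (1 ⊗ₜ TensorProduct.lid R H (counit.rTensor H x)) := by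
    induction x using TensorProduct.induction_on with
    | zero => simp
    | tmul a b =>
      rw [galoisInvL_tmul, sandwich_mul_one_tmul, ← iL, ← iL_mul, ht a]
      simp [iL]
    | add x₁ x₂ h₁ h₂ => simp_all [TensorProduct.tmul_add, mul_add]
  intro h
  simpa [galoisInvL_comul, ← Algebra.TensorProduct.one_def] using key (comul h)

lemma isCentralising_iR {t : H} (ht : IsRightIntegral R t) : IsCentralising R (iR R t) := by
  have key (x : H ⊗[R] H) : sandwich (iR R t) (galoisInvR R H x) =
      (TensorProduct.rid R H (counit.lTensor H x) ⊗ₜ 1) * iR R t := by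
    induction x using TensorProduct.induction_on with
    | zero => simp
    | tmul a b =>
      rw [galoisInvR_tmul, sandwich_tmul_one_mul, ← iR, ← iR_mul, ht b]
      simp [iR, ← TensorProduct.smul_tmul']
    | add x₁ x₂ h₁ h₂ => simp_all [TensorProduct.add_tmul, add_mul]
  intro h
  simpa [galoisInvR_comul, ← Algebra.TensorProduct.one_def] using (key (comul h)).symm

lemma pL_tmul_one_mul (h : H) (x : H ⊗[R] H) : pL R ((h ⊗ₜ 1) * x) = h * pL R x := by
  induction x using TensorProduct.induction_on with
  | zero => simp [pL]
  | tmul a b => simp [pL]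
  | add x₁ x₂ h₁ h₂ => simp_all [pL, mul_add]

lemma pL_mul_one_tmul (h : H) (x : H ⊗[R] H) :
    pL R (x * (1 ⊗ₜ h)) = counit (R := R) h • pL R x := by
  induction x using TensorProduct.induction_on with
  | zero => simp [pL]
  | tmul a b => simp [pL, Bialgebra.counit_mul, mul_comm, mul_smul]
  | add x₁ x₂ h₁ h₂ => simp_all [pL, add_mul]

lemma pR_tmul_one_mul (h : H) (x : H ⊗[R] H) :
    pR R ((h ⊗ₜ 1) * x) = counit (R := R) h • pR R x := by
  induction x using TensorProduct.induction_on with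
  | zero => simp [pR]
  | tmul a b => simp [pR, Bialgebra.counit_mul, mul_smul]
  | add x₁ x₂ h₁ h₂ => simp_all [pR, mul_add]

lemma pR_mul_one_tmul (h : H) (x : H ⊗[R] H) : pR R (x * (1 ⊗ₜ h)) = pR R x * h := by
  induction x using TensorProduct.induction_on with
  | zero => simp [pR]
  | tmul a b => simp [pR]
  | add x₁ x₂ h₁ h₂ => simp_all [pR, add_mul]

lemma isLeftIntegral_pL {x : H ⊗[R] H} (hx : IsCentralising R x) : IsLeftIntegral R (pL R x) := by
  intro h
  rw [← pL_tmul_one_mul, hx h, pL_mul_one_tmul]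

lemma isRightIntegral_pR {x : H ⊗[R] H} (hx : IsCentralising R x) :
    IsRightIntegral R (pR R x) := by
  intro h
  rw [← pR_mul_one_tmul, ← hx h, pR_tmul_one_mul]

lemma pL_iL (t : H) : pL R (iL R t) = t := by
  rw [pL, iL, ← lTensor_comp_apply, counit_comp_antipode, lTensor_counit_comul,
    TensorProduct.rid_tmul, one_smul]

lemma pR_iR (t : H) : pR R (iR R t) = t := by
  rw [pR, iR, ← rTensor_comp_apply, counit_comp_antipode, rTensor_counit_comul,
    TensorProduct.lid_tmul, one_smul]

end Integrals

theorem integral_centralising_correspondence (R : Type u) (H : Type v) [CommRing R] [Ring H]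
    [HopfAlgebra R H] :
    (∀ t : H, IsLeftIntegral R t → IsCentralising R (iL R t)) ∧
    (∀ x : H ⊗[R] H, IsCentralising R x → IsLeftIntegral R (pL R x)) ∧
    (∀ t : H, IsLeftIntegral R t → pL R (iL R t) = t) ∧
    (∀ t : H, IsRightIntegral R t → IsCentralising R (iR R t)) ∧
    (∀ x : H ⊗[R] H, IsCentralising R x → IsRightIntegral R (pR R x)) ∧
    (∀ t : H, IsRightIntegral R t → pR R (iR R t) = t) :=
  ⟨fun _ => isCentralising_iL, fun _ => isLeftIntegral_pL, fun t _ => pL_iL t,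
    fun _ => isCentralising_iR, fun _ => isRightIntegral_pR, fun t _ => pR_iR t⟩
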